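/- Let g, h be Leibniz algebras. If two non-abelian 2-cocycles (l¹,r¹,ω¹) and (l²,r²,ω²) on g with values in h are equivalent via a linear map φ : g → h, then the corresponding Leibniz algebra extensions (g⊕h, [·,·]_{(l¹,r¹,ω¹)}) and (g⊕h, [·,·]_{(l²,r²,ω²)}) are isomorphic via θ(x+α) = x − φ(x) + α, a Leibniz algebra isomorphism commuting with the inclusions of h and projections to g. -/

import Mathlib

/-! θ is the shear `(x, α) ↦ (x, α - φ x)` of `g × h`, whose inverse is the shear by `+φ`.
Expanding both sides of `θ [u, v]₂ = [θ u, θ v]₁`, the `g`-components agree trivially and the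
difference of the `h`-components is exactly a combination of the three equivalence conditions. -/

variable {K : Type*} [Field K]
  {g : Type*} [AddCommGroup g] [Module K g]
  {h : Type*} [AddCommGroup h] [Module K h]

/-- The extension bracket on `g ⊕ h` determined by `(l, r, ω)`. -/
def extBracket (Bg : g →ₗ[K] g →ₗ[K] g) (Bh : h →ₗ[K] h →ₗ[K] h)
    (l r : g →ₗ[K] Module.End K h) (ω : g →ₗ[K] g →ₗ[K] h)
    (u v : g × h) : g × h :=
  (Bg u.1 v.1, ω u.1 v.1 + l u.1 v.2 + r v.1 u.2 + Bh u.2 v.2)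

theorem extBracket_shear_of_equiv {Bg : g →ₗ[K] g →ₗ[K] g} {Bh : h →ₗ[K] h →ₗ[K] h}
    {l₁ r₁ l₂ r₂ : g →ₗ[K] Module.End K h} {ω₁ ω₂ : g →ₗ[K] g →ₗ[K] h} {φ : g →ₗ[K] h}
    (hl : ∀ (x : g) (α : h), l₁ x α - l₂ x α = Bh (φ x) α)
    (hr : ∀ (x : g) (α : h), r₁ x α - r₂ x α = Bh α (φ x))
    (hω : ∀ x y : g, ω₁ x y - ω₂ x y =
        l₂ x (φ y) + r₂ y (φ x) + Bh (φ x) (φ y) - φ (Bg x y))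
    (u v : g × h) :
    ((extBracket Bg Bh l₂ r₂ ω₂ u v).1,
        (extBracket Bg Bh l₂ r₂ ω₂ u v).2 - φ (extBracket Bg Bh l₂ r₂ ω₂ u v).1) =
      extBracket Bg Bh l₁ r₁ ω₁ (u.1, u.2 - φ u.1) (v.1, v.2 - φ v.1) := by
  obtain ⟨x, α⟩ := u
  obtain ⟨y, β⟩ := v
  ext
  · rfl
  · simp only [extBracket, map_sub, LinearMap.sub_apply]
    linear_combination (norm := abel) hl x (φ y) + hr y (φ x) - hl x β - hr y α - hω x y

theorem equivalent_cocycles_isomorphic_extensions_general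
    (Bg : g →ₗ[K] g →ₗ[K] g)
    (Bh : h →ₗ[K] h →ₗ[K] h)
    (l₁ r₁ l₂ r₂ : g →ₗ[K] Module.End K h) (ω₁ ω₂ : g →ₗ[K] g →ₗ[K] h)
    -- equivalence of the two cocycles via φ
    (φ : g →ₗ[K] h)
    (hl : ∀ (x : g) (α : h), l₁ x α - l₂ x α = Bh (φ x) α)
    (hr : ∀ (x : g) (α : h), r₁ x α - r₂ x α = Bh α (φ x))
    (hω : ∀ x y : g, ω₁ x y - ω₂ x y =
        l₂ x (φ y) + r₂ y (φ x) + Bh (φ x) (φ y) - φ (Bg x y)) :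
    Function.Bijective (fun u : g × h => (u.1, u.2 - φ u.1)) ∧
    (∀ u v : g × h,
        (fun u : g × h => (u.1, u.2 - φ u.1)) (extBracket Bg Bh l₂ r₂ ω₂ u v) =
          extBracket Bg Bh l₁ r₁ ω₁
            ((fun u : g × h => (u.1, u.2 - φ u.1)) u)
            ((fun u : g × h => (u.1, u.2 - φ u.1)) v)) ∧
    (∀ α : h, (fun u : g × h => (u.1, u.2 - φ u.1)) ((0 : g), α) = (0, α)) ∧
    (∀ u : g × h, ((fun u : g × h => (u.1, u.2 - φ u.1)) u).1 = u.1) :=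
  ⟨(Equiv.prodShear (Equiv.refl g) fun x => Equiv.subRight (φ x)).bijective,
    extBracket_shear_of_equiv hl hr hω,
    fun α => by simp,
    fun _ => rfl⟩

/-- If two non-abelian 2-cocycles `(l¹,r¹,ω¹)` and `(l²,r²,ω²)` are
equivalent via `φ : g → h`, then the corresponding extensions are isomorphic
via `θ(x+α) = x - φ(x) + α`: `θ` is a bijective Leibniz algebra morphism from
`(g⊕h, [·,·]_{(l²,r²,ω²)})` to `(g⊕h, [·,·]_{(l¹,r¹,ω¹)})` fixing `h`
pointwise and commuting with the projections to `g`. -/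
theorem equivalent_cocycles_isomorphic_extensions
    (Bg : g →ₗ[K] g →ₗ[K] g)
    (hg : ∀ x y z : g, Bg x (Bg y z) = Bg (Bg x y) z + Bg y (Bg x z))
    (Bh : h →ₗ[K] h →ₗ[K] h)
    (hh : ∀ a b c : h, Bh a (Bh b c) = Bh (Bh a b) c + Bh b (Bh a c))
    (l₁ r₁ l₂ r₂ : g →ₗ[K] Module.End K h) (ω₁ ω₂ : g →ₗ[K] g →ₗ[K] h)
    -- both brackets are Leibniz brackets (i.e. the triples are 2-cocycles)
    (hext₁ : ∀ u v w : g × h,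
        extBracket Bg Bh l₁ r₁ ω₁ u (extBracket Bg Bh l₁ r₁ ω₁ v w) =
          extBracket Bg Bh l₁ r₁ ω₁ (extBracket Bg Bh l₁ r₁ ω₁ u v) w +
            extBracket Bg Bh l₁ r₁ ω₁ v (extBracket Bg Bh l₁ r₁ ω₁ u w))
    (hext₂ : ∀ u v w : g × h,
        extBracket Bg Bh l₂ r₂ ω₂ u (extBracket Bg Bh l₂ r₂ ω₂ v w) =
          extBracket Bg Bh l₂ r₂ ω₂ (extBracket Bg Bh l₂ r₂ ω₂ u v) w +
            extBracket Bg Bh l₂ r₂ ω₂ v (extBracket Bg Bh l₂ r₂ ω₂ u w))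
    -- equivalence of the two cocycles via φ
    (φ : g →ₗ[K] h)
    (hl : ∀ (x : g) (α : h), l₁ x α - l₂ x α = Bh (φ x) α)
    (hr : ∀ (x : g) (α : h), r₁ x α - r₂ x α = Bh α (φ x))
    (hω : ∀ x y : g, ω₁ x y - ω₂ x y =
        l₂ x (φ y) + r₂ y (φ x) + Bh (φ x) (φ y) - φ (Bg x y)) :
    Function.Bijective (fun u : g × h => (u.1, u.2 - φ u.1)) ∧
    (∀ u v : g × h,
        (fun u : g × h => (u.1, u.2 - φ u.1)) (extBracket Bg Bh l₂ r₂ ω₂ u v) =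
          extBracket Bg Bh l₁ r₁ ω₁
            ((fun u : g × h => (u.1, u.2 - φ u.1)) u)
            ((fun u : g × h => (u.1, u.2 - φ u.1)) v)) ∧
    (∀ α : h, (fun u : g × h => (u.1, u.2 - φ u.1)) ((0 : g), α) = (0, α)) ∧
    (∀ u : g × h, ((fun u : g × h => (u.1, u.2 - φ u.1)) u).1 = u.1) :=
  equivalent_cocycles_isomorphic_extensions_general Bg Bh l₁ r₁ l₂ r₂ ω₁ ω₂ φ hl hr hω
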